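/- In a model category, given a commutative diagram mapping a span Y₀ ← X₀ → Z₀ to a span Y₁ ← X₁ → Z₁ in which all objects are cofibrant, both maps X₀ → Y₀ and X₁ → Y₁ are cofibrations, and the three vertical maps Y₀ → Y₁, X₀ → X₁, Z₀ → Z₁ are weak equivalences, the induced map on pushouts Y₀ ⊔_{X₀} Z₀ → Y₁ ⊔_{X₁} Z₁ is a weak equivalence. -/

import Mathlib

open CategoryTheory Limits

/-- A class of morphisms is closed under retracts. -/
def RetractClosed {M : Type*} [Category M] (P : MorphismProperty M) : Prop :=
  ∀ {X Y X' Y' : M} {f : X ⟶ Y} {g : X' ⟶ Y'}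
    (i : X ⟶ X') (r : X' ⟶ X) (j : Y ⟶ Y') (s : Y' ⟶ Y),
    i ≫ r = 𝟙 X → j ≫ s = 𝟙 Y → i ≫ g = f ≫ j → g ≫ s = r ≫ f → P g → P f

/-- A (Quillen) model structure on a bicomplete category: weak equivalences
`W`, cofibrations `Cof` and fibrations `Fib`, satisfying the two-out-of-three
axiom, closure under retracts, the lifting axioms and the factorization
axioms. -/
class ModelStructure (M : Type*) [Category M] [HasLimits M] [HasColimits M] where
  W : MorphismProperty M
  Cof : MorphismProperty M
  Fib : MorphismProperty M
  W_of_iso : ∀ {X Y : M} (f : X ⟶ Y), IsIso f → W f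
  W_comp : ∀ {X Y Z : M} (f : X ⟶ Y) (g : Y ⟶ Z), W f → W g → W (f ≫ g)
  W_of_comp_left : ∀ {X Y Z : M} (f : X ⟶ Y) (g : Y ⟶ Z), W f → W (f ≫ g) → W g
  W_of_comp_right : ∀ {X Y Z : M} (f : X ⟶ Y) (g : Y ⟶ Z), W g → W (f ≫ g) → W f
  W_retract : RetractClosed W
  Cof_retract : RetractClosed Cof
  Fib_retract : RetractClosed Fib
  lift_cof_trivFib : ∀ {A B X Y : M} (i : A ⟶ B) (p : X ⟶ Y),
    Cof i → Fib p → W p → ∀ (f : A ⟶ X) (g : B ⟶ Y), f ≫ p = i ≫ g →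
      ∃ h : B ⟶ X, i ≫ h = f ∧ h ≫ p = g
  lift_trivCof_fib : ∀ {A B X Y : M} (i : A ⟶ B) (p : X ⟶ Y),
    Cof i → W i → Fib p → ∀ (f : A ⟶ X) (g : B ⟶ Y), f ≫ p = i ≫ g →
      ∃ h : B ⟶ X, i ≫ h = f ∧ h ≫ p = g
  factor_cof_trivFib : ∀ {X Y : M} (f : X ⟶ Y),
    ∃ (Z : M) (i : X ⟶ Z) (p : Z ⟶ Y), Cof i ∧ Fib p ∧ W p ∧ i ≫ p = f
  factor_trivCof_fib : ∀ {X Y : M} (f : X ⟶ Y),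
    ∃ (Z : M) (i : X ⟶ Z) (p : Z ⟶ Y), Cof i ∧ W i ∧ Fib p ∧ i ≫ p = f

section Aux

attribute [local simp] pushout.inl_desc pushout.inr_desc pushout.inl_desc_assoc
  pushout.inr_desc_assoc
attribute [local simp] coprod.inl_desc coprod.inr_desc coprod.inl_desc_assoc
  coprod.inr_desc_assoc

variable {M : Type*} [Category M] [HasLimits M] [HasColimits M] [ms : ModelStructure M]

lemma cof_of_llp {A B : M} (f : A ⟶ B)
    (h : ∀ {X Y : M} (p : X ⟶ Y), ms.Fib p → ms.W p → ∀ (u : A ⟶ X) (v : B ⟶ Y),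
      u ≫ p = f ≫ v → ∃ l : B ⟶ X, f ≫ l = u ∧ l ≫ p = v) : ms.Cof f := by
  obtain ⟨Z, i, p, hi, hp, hw, fac⟩ := ms.factor_cof_trivFib f
  obtain ⟨l, hl1, hl2⟩ := h p hp hw i (𝟙 B) (by rw [fac, Category.comp_id])
  exact ms.Cof_retract (𝟙 A) (𝟙 A) l p (by simp) hl2
    (by rw [Category.id_comp, hl1]) (by rw [fac, Category.id_comp]) hi

lemma trivCof_of_llp {A B : M} (f : A ⟶ B)
    (h : ∀ {X Y : M} (p : X ⟶ Y), ms.Fib p → ∀ (u : A ⟶ X) (v : B ⟶ Y),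
      u ≫ p = f ≫ v → ∃ l : B ⟶ X, f ≫ l = u ∧ l ≫ p = v) :
    ms.Cof f ∧ ms.W f := by
  obtain ⟨Z, i, p, hi, hwi, hp, fac⟩ := ms.factor_trivCof_fib f
  obtain ⟨l, hl1, hl2⟩ := h p hp i (𝟙 B) (by rw [fac, Category.comp_id])
  exact ⟨ms.Cof_retract (𝟙 A) (𝟙 A) l p (by simp) hl2
      (by rw [Category.id_comp, hl1]) (by rw [fac, Category.id_comp]) hi,
    ms.W_retract (𝟙 A) (𝟙 A) l p (by simp) hl2
      (by rw [Category.id_comp, hl1]) (by rw [fac, Category.id_comp]) hwi⟩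

lemma cof_of_isPushout {A B C P : M} {f : A ⟶ B} {g : A ⟶ C} {inl : B ⟶ P} {inr : C ⟶ P}
    (sq : IsPushout f g inl inr) (hf : ms.Cof f) : ms.Cof inr := by
  apply cof_of_llp
  intro X Y p hp hw u v huv
  obtain ⟨l, hl1, hl2⟩ := ms.lift_cof_trivFib f p hf hp hw (g ≫ u) (inl ≫ v)
    (by rw [Category.assoc, huv, ← Category.assoc, ← Category.assoc, sq.w])
  refine ⟨sq.desc l u hl1, sq.inr_desc _ _ _, ?_⟩
  apply sq.hom_ext
  · rw [← Category.assoc, sq.inl_desc, hl2]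
  · rw [← Category.assoc, sq.inr_desc, huv]

lemma trivCof_of_isPushout {A B C P : M} {f : A ⟶ B} {g : A ⟶ C} {inl : B ⟶ P} {inr : C ⟶ P}
    (sq : IsPushout f g inl inr) (hf : ms.Cof f) (hwf : ms.W f) :
    ms.Cof inr ∧ ms.W inr := by
  apply trivCof_of_llp
  intro X Y p hp u v huv
  obtain ⟨l, hl1, hl2⟩ := ms.lift_trivCof_fib f p hf hwf hp (g ≫ u) (inl ≫ v)
    (by rw [Category.assoc, huv, ← Category.assoc, ← Category.assoc, sq.w])
  refine ⟨sq.desc l u hl1, sq.inr_desc _ _ _, ?_⟩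
  apply sq.hom_ext
  · rw [← Category.assoc, sq.inl_desc, hl2]
  · rw [← Category.assoc, sq.inr_desc, huv]

lemma cof_comp {A B C : M} {f : A ⟶ B} {g : B ⟶ C} (hf : ms.Cof f) (hg : ms.Cof g) :
    ms.Cof (f ≫ g) := by
  apply cof_of_llp
  intro X Y p hp hw u v huv
  obtain ⟨l1, h11, h12⟩ := ms.lift_cof_trivFib f p hf hp hw u (g ≫ v)
    (by rw [huv, Category.assoc])
  obtain ⟨l2, h21, h22⟩ := ms.lift_cof_trivFib g p hg hp hw l1 v h12
  exact ⟨l2, by rw [Category.assoc, h21, h11], h22⟩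

lemma coprod_partial_cond {X₀ Y₀ X₁ Y₁ T : M} (f₀ : X₀ ⟶ Y₀) (f₁ : X₁ ⟶ Y₁)
    (q : X₀ ⨿ X₁ ⟶ T) :
    f₀ ≫ coprod.inl ≫ pushout.inl (coprod.map f₀ f₁) q
      = (coprod.inl ≫ q) ≫ pushout.inr (coprod.map f₀ f₁) q := by
  rw [← Category.assoc, ← coprod.inl_map f₀ f₁, Category.assoc, pushout.condition,
    Category.assoc]

lemma coprod_partial_cond' {X₀ Y₀ X₁ Y₁ T : M} (f₀ : X₀ ⟶ Y₀) (f₁ : X₁ ⟶ Y₁)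
    (q : X₀ ⨿ X₁ ⟶ T) :
    f₁ ≫ coprod.inr ≫ pushout.inl (coprod.map f₀ f₁) q
      = (coprod.inr ≫ q) ≫ pushout.inr (coprod.map f₀ f₁) q := by
  rw [← Category.assoc, ← coprod.inr_map f₀ f₁, Category.assoc, pushout.condition,
    Category.assoc]

/-- Decomposition of the pushout over a coproduct: gluing `Y₁` onto the partial
pushout `V = Y₀ ⊔_{X₀} T` gives the total pushout `(Y₀ ⨿ Y₁) ⊔_{X₀ ⨿ X₁} T`. -/
lemma isPushout_coprod_left {X₀ Y₀ X₁ Y₁ T : M} (f₀ : X₀ ⟶ Y₀) (f₁ : X₁ ⟶ Y₁)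
    (q : X₀ ⨿ X₁ ⟶ T) :
    IsPushout f₁ (coprod.inr ≫ q ≫ pushout.inr f₀ (coprod.inl ≫ q))
      (coprod.inr ≫ pushout.inl (coprod.map f₀ f₁) q)
      (pushout.desc (coprod.inl ≫ pushout.inl (coprod.map f₀ f₁) q)
        (pushout.inr (coprod.map f₀ f₁) q) (coprod_partial_cond f₀ f₁ q)) := by
  have w : f₁ ≫ coprod.inr ≫ pushout.inl (coprod.map f₀ f₁) q
      = (coprod.inr ≫ q ≫ pushout.inr f₀ (coprod.inl ≫ q))
        ≫ pushout.desc (coprod.inl ≫ pushout.inl (coprod.map f₀ f₁) q)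
          (pushout.inr (coprod.map f₀ f₁) q) (coprod_partial_cond f₀ f₁ q) := by
    rw [coprod_partial_cond' f₀ f₁ q]
    simp
  apply IsPushout.of_isColimit' ⟨w⟩
  have dcond : ∀ s : PushoutCocone f₁ (coprod.inr ≫ q ≫ pushout.inr f₀ (coprod.inl ≫ q)),
      coprod.map f₀ f₁ ≫ coprod.desc (pushout.inl f₀ (coprod.inl ≫ q) ≫ s.inr) s.inl
        = q ≫ pushout.inr f₀ (coprod.inl ≫ q) ≫ s.inr := by
    intro s
    apply coprod.hom_ext
    · simp only [coprod.inl_map_assoc, coprod.inl_desc, pushout.condition_assoc,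
        Category.assoc]
    · simp only [coprod.inr_map_assoc, coprod.inr_desc]
      simpa using s.condition
  apply PushoutCocone.IsColimit.mk _
    (fun s => pushout.desc
      (coprod.desc (pushout.inl f₀ (coprod.inl ≫ q) ≫ s.inr) s.inl)
      (pushout.inr f₀ (coprod.inl ≫ q) ≫ s.inr) (dcond s))
  · intro s
    simp
  · intro s
    apply pushout.hom_ext
    · simp
    · simp
  · intro s m' h1 h2
    apply pushout.hom_ext
    · apply coprod.hom_ext
      · have E1 := congrArg (fun t => pushout.inl f₀ (coprod.inl ≫ q) ≫ t) h2
        simpa using E1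
      · simpa using h1
    · have E2 := congrArg (fun t => pushout.inr f₀ (coprod.inl ≫ q) ≫ t) h2
      simpa using E2

/-- Symmetric version: gluing `Y₀` onto the partial pushout `V₁ = Y₁ ⊔_{X₁} T`
gives the total pushout. -/
lemma isPushout_coprod_right {X₀ Y₀ X₁ Y₁ T : M} (f₀ : X₀ ⟶ Y₀) (f₁ : X₁ ⟶ Y₁)
    (q : X₀ ⨿ X₁ ⟶ T) :
    IsPushout f₀ (coprod.inl ≫ q ≫ pushout.inr f₁ (coprod.inr ≫ q))
      (coprod.inl ≫ pushout.inl (coprod.map f₀ f₁) q)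
      (pushout.desc (coprod.inr ≫ pushout.inl (coprod.map f₀ f₁) q)
        (pushout.inr (coprod.map f₀ f₁) q) (coprod_partial_cond' f₀ f₁ q)) := by
  have w : f₀ ≫ coprod.inl ≫ pushout.inl (coprod.map f₀ f₁) q
      = (coprod.inl ≫ q ≫ pushout.inr f₁ (coprod.inr ≫ q))
        ≫ pushout.desc (coprod.inr ≫ pushout.inl (coprod.map f₀ f₁) q)
          (pushout.inr (coprod.map f₀ f₁) q) (coprod_partial_cond' f₀ f₁ q) := by
    rw [coprod_partial_cond f₀ f₁ q]
    simp
  apply IsPushout.of_isColimit' ⟨w⟩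
  have dcond : ∀ s : PushoutCocone f₀ (coprod.inl ≫ q ≫ pushout.inr f₁ (coprod.inr ≫ q)),
      coprod.map f₀ f₁ ≫ coprod.desc s.inl (pushout.inl f₁ (coprod.inr ≫ q) ≫ s.inr)
        = q ≫ pushout.inr f₁ (coprod.inr ≫ q) ≫ s.inr := by
    intro s
    apply coprod.hom_ext
    · simp only [coprod.inl_map_assoc, coprod.inl_desc]
      simpa using s.condition
    · simp only [coprod.inr_map_assoc, coprod.inr_desc, pushout.condition_assoc,
        Category.assoc]
  apply PushoutCocone.IsColimit.mk _
    (fun s => pushout.desc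
      (coprod.desc s.inl (pushout.inl f₁ (coprod.inr ≫ q) ≫ s.inr))
      (pushout.inr f₁ (coprod.inr ≫ q) ≫ s.inr) (dcond s))
  · intro s
    simp
  · intro s
    apply pushout.hom_ext
    · simp
    · simp
  · intro s m' h1 h2
    apply pushout.hom_ext
    · apply coprod.hom_ext
      · simpa using h1
      · have E1 := congrArg (fun t => pushout.inl f₁ (coprod.inr ≫ q) ≫ t) h2
        simpa using E1
    · have E2 := congrArg (fun t => pushout.inr f₁ (coprod.inr ≫ q) ≫ t) h2
      simpa using E2

/-- The trivial-cofibration case of the gluing lemma: if `z` is a trivial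
cofibration and the comparison map `Y₀ ⊔_{X₀} X₁ ⟶ Y₁` is a trivial
cofibration, then the induced map on pushouts is a weak equivalence. -/
lemma glue_trivCof {X₀ Y₀ Z₀ X₁ Y₁ Z₁ : M}
    (iY₀ : X₀ ⟶ Y₀) (iZ₀ : X₀ ⟶ Z₀) (iY₁ : X₁ ⟶ Y₁) (iZ₁ : X₁ ⟶ Z₁)
    (x : X₀ ⟶ X₁) (y : Y₀ ⟶ Y₁) (z : Z₀ ⟶ Z₁)
    (h₁ : iY₀ ≫ y = x ≫ iY₁) (h₂ : iZ₀ ≫ z = x ≫ iZ₁)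
    (cz : ms.Cof z) (wz : ms.W z)
    (cw : ms.Cof (pushout.desc y iY₁ h₁)) (ww : ms.W (pushout.desc y iY₁ h₁)) :
    ms.W (pushout.map iY₀ iZ₀ iY₁ iZ₁ y z x h₁ h₂) := by
  have hQ : iY₀ ≫ pushout.inl iY₀ (iZ₀ ≫ z) = iZ₀ ≫ z ≫ pushout.inr iY₀ (iZ₀ ≫ z) := by
    rw [pushout.condition, Category.assoc]
  have hv : iY₀ ≫ pushout.inl iY₀ (iZ₀ ≫ z) = x ≫ iZ₁ ≫ pushout.inr iY₀ (iZ₀ ≫ z) := by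
    rw [pushout.condition, ← Category.assoc]
    exact congrArg (fun t => t ≫ pushout.inr iY₀ (iZ₀ ≫ z)) h₂
  have hb : iY₀ ≫ y ≫ pushout.inl iY₁ iZ₁ = (iZ₀ ≫ z) ≫ pushout.inr iY₁ iZ₁ := by
    rw [← Category.assoc, h₁, h₂, Category.assoc, Category.assoc, pushout.condition]
  -- the three comparison maps
  set a : pushout iY₀ iZ₀ ⟶ pushout iY₀ (iZ₀ ≫ z) :=
    pushout.desc (pushout.inl iY₀ (iZ₀ ≫ z)) (z ≫ pushout.inr iY₀ (iZ₀ ≫ z)) hQ with ha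
  set v : pushout iY₀ x ⟶ pushout iY₀ (iZ₀ ≫ z) :=
    pushout.desc (pushout.inl iY₀ (iZ₀ ≫ z)) (iZ₁ ≫ pushout.inr iY₀ (iZ₀ ≫ z)) hv with hvd
  set b : pushout iY₀ (iZ₀ ≫ z) ⟶ pushout iY₁ iZ₁ :=
    pushout.desc (y ≫ pushout.inl iY₁ iZ₁) (pushout.inr iY₁ iZ₁) hb with hbd
  -- `a` is the cobase change of `z`
  have sqa : IsPushout z (pushout.inr iY₀ iZ₀) (pushout.inr iY₀ (iZ₀ ≫ z)) a := by
    have t := (IsPushout.of_hasPushout iY₀ iZ₀).flip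
    have s : IsPushout (iZ₀ ≫ z) iY₀ (pushout.inr iY₀ (iZ₀ ≫ z))
        (pushout.inl iY₀ iZ₀ ≫ a) := by
      rw [show pushout.inl iY₀ iZ₀ ≫ a = pushout.inl iY₀ (iZ₀ ≫ z) from by
        rw [ha]; exact pushout.inl_desc _ _ _]
      exact (IsPushout.of_hasPushout iY₀ (iZ₀ ≫ z)).flip
    exact IsPushout.of_left s (by rw [ha, pushout.inr_desc]) t
  -- the square relating `v` to the pushout of `iZ₁`
  have sq1 : IsPushout iZ₁ (pushout.inr iY₀ x) (pushout.inr iY₀ (iZ₀ ≫ z)) v := by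
    have t := (IsPushout.of_hasPushout iY₀ x).flip
    have s : IsPushout (x ≫ iZ₁) iY₀ (pushout.inr iY₀ (iZ₀ ≫ z))
        (pushout.inl iY₀ x ≫ v) := by
      rw [show pushout.inl iY₀ x ≫ v = pushout.inl iY₀ (iZ₀ ≫ z) from by
        rw [hvd]; exact pushout.inl_desc _ _ _, ← h₂]
      exact (IsPushout.of_hasPushout iY₀ (iZ₀ ≫ z)).flip
    exact IsPushout.of_left s (by rw [hvd, pushout.inr_desc]) t
  -- `b` is the cobase change of the comparison map `w`
  have sq2 : IsPushout (pushout.desc y iY₁ h₁) v (pushout.inl iY₁ iZ₁) b := by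
    have t := sq1.flip
    have s : IsPushout (pushout.inr iY₀ x ≫ pushout.desc y iY₁ h₁) iZ₁
        (pushout.inl iY₁ iZ₁) (pushout.inr iY₀ (iZ₀ ≫ z) ≫ b) := by
      rw [pushout.inr_desc, show pushout.inr iY₀ (iZ₀ ≫ z) ≫ b = pushout.inr iY₁ iZ₁ from by
        rw [hbd]; exact pushout.inr_desc _ _ _]
      exact IsPushout.of_hasPushout iY₁ iZ₁
    have pcomm : pushout.desc y iY₁ h₁ ≫ pushout.inl iY₁ iZ₁ = v ≫ b := by
      apply pushout.hom_ext
      · simp [hvd, hbd]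
      · simp [hvd, hbd, pushout.condition]
    exact IsPushout.of_left s pcomm t
  obtain ⟨ca, wa⟩ := trivCof_of_isPushout sqa cz wz
  obtain ⟨cb, wb⟩ := trivCof_of_isPushout sq2 cw ww
  have comp : pushout.map iY₀ iZ₀ iY₁ iZ₁ y z x h₁ h₂ = a ≫ b := by
    apply pushout.hom_ext
    · simp [ha, hbd]
    · simp [ha, hbd]
  rw [comp]
  exact ms.W_comp a b wa wb

end Aux

attribute [local simp] pushout.inl_desc pushout.inr_desc pushout.inl_desc_assoc
  pushout.inr_desc_assoc
attribute [local simp] coprod.inl_desc coprod.inr_desc coprod.inl_desc_assoc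
  coprod.inr_desc_assoc

/-- The gluing lemma (cube lemma): in a model category, given a map of spans
`(Y₀ ← X₀ → Z₀) → (Y₁ ← X₁ → Z₁)` in which all six objects are cofibrant, the
maps `X₀ → Y₀` and `X₁ → Y₁` are cofibrations, and the three comparison maps
are weak equivalences, the induced map on pushouts
`Y₀ ⊔_{X₀} Z₀ ⟶ Y₁ ⊔_{X₁} Z₁` is a weak equivalence. -/
theorem gluing_lemma {M : Type*} [Category M] [HasLimits M] [HasColimits M]
    [ms : ModelStructure M] {X₀ Y₀ Z₀ X₁ Y₁ Z₁ : M}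
    (iY₀ : X₀ ⟶ Y₀) (iZ₀ : X₀ ⟶ Z₀) (iY₁ : X₁ ⟶ Y₁) (iZ₁ : X₁ ⟶ Z₁)
    (x : X₀ ⟶ X₁) (y : Y₀ ⟶ Y₁) (z : Z₀ ⟶ Z₁)
    (cX₀ : ms.Cof (initial.to X₀)) (cY₀ : ms.Cof (initial.to Y₀))
    (cZ₀ : ms.Cof (initial.to Z₀)) (cX₁ : ms.Cof (initial.to X₁))
    (cY₁ : ms.Cof (initial.to Y₁)) (cZ₁ : ms.Cof (initial.to Z₁))
    (cof₀ : ms.Cof iY₀) (cof₁ : ms.Cof iY₁)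
    (wx : ms.W x) (wy : ms.W y) (wz : ms.W z)
    (h₁ : iY₀ ≫ y = x ≫ iY₁) (h₂ : iZ₀ ≫ z = x ≫ iZ₁) :
    ms.W (pushout.map iY₀ iZ₀ iY₁ iZ₁ y z x h₁ h₂) := by
  -- Reedy-style factorization of the fold maps (Ken Brown's lemma for spans).
  obtain ⟨X₂, qX, pX, cqX, fpX, wpX, facX⟩ := ms.factor_cof_trivFib (coprod.desc x (𝟙 X₁))
  obtain ⟨Z₂, qZ, pZ, cqZ, fpZ, wpZ, facZ⟩ := ms.factor_cof_trivFib (coprod.desc z (𝟙 Z₁))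
  have rcond : coprod.map iY₀ iY₁ ≫ coprod.desc y (𝟙 Y₁) = qX ≫ pX ≫ iY₁ := by
    rw [← Category.assoc, facX]
    apply coprod.hom_ext
    · simp [h₁]
    · simp
  obtain ⟨Y₂, qY', pY, cqY', fpY, wpY, facY⟩ :=
    ms.factor_cof_trivFib (pushout.desc (coprod.desc y (𝟙 Y₁)) (pX ≫ iY₁) rcond)
  obtain ⟨iZ₂, hiZa, hiZb⟩ := ms.lift_cof_trivFib qX pZ cqX fpZ wpZ
    (coprod.map iZ₀ iZ₁ ≫ qZ) (pX ≫ iZ₁) (by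
      rw [Category.assoc, facZ, ← Category.assoc, facX]
      apply coprod.hom_ext
      · simp [h₂]
      · simp)
  -- commutation of the two span maps into the middle span
  have c10 : iY₀ ≫ coprod.inl ≫ pushout.inl (coprod.map iY₀ iY₁) qX ≫ qY'
      = (coprod.inl ≫ qX) ≫ pushout.inr (coprod.map iY₀ iY₁) qX ≫ qY' := by
    simp only [Category.assoc]
    rw [← pushout.condition_assoc, coprod.inl_map_assoc]
  have c11 : iY₁ ≫ coprod.inr ≫ pushout.inl (coprod.map iY₀ iY₁) qX ≫ qY'
      = (coprod.inr ≫ qX) ≫ pushout.inr (coprod.map iY₀ iY₁) qX ≫ qY' := by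
    simp only [Category.assoc]
    rw [← pushout.condition_assoc, coprod.inr_map_assoc]
  have c20 : iZ₀ ≫ coprod.inl ≫ qZ = (coprod.inl ≫ qX) ≫ iZ₂ := by
    simp only [Category.assoc]
    rw [hiZa, coprod.inl_map_assoc]
  have c21 : iZ₁ ≫ coprod.inr ≫ qZ = (coprod.inr ≫ qX) ≫ iZ₂ := by
    simp only [Category.assoc]
    rw [hiZa, coprod.inr_map_assoc]
  have cp1 : (pushout.inr (coprod.map iY₀ iY₁) qX ≫ qY') ≫ pY = pX ≫ iY₁ := by
    rw [Category.assoc, facY, pushout.inr_desc]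
  -- weak equivalence components
  have fx : (coprod.inl ≫ qX) ≫ pX = x := by
    rw [Category.assoc, facX, coprod.inl_desc]
  have ex : (coprod.inr ≫ qX) ≫ pX = 𝟙 X₁ := by
    rw [Category.assoc, facX, coprod.inr_desc]
  have fz : (coprod.inl ≫ qZ) ≫ pZ = z := by
    rw [Category.assoc, facZ, coprod.inl_desc]
  have ez : (coprod.inr ≫ qZ) ≫ pZ = 𝟙 Z₁ := by
    rw [Category.assoc, facZ, coprod.inr_desc]
  have fy : (coprod.inl ≫ pushout.inl (coprod.map iY₀ iY₁) qX ≫ qY') ≫ pY = y := by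
    simp only [Category.assoc, facY, pushout.inl_desc, coprod.inl_desc]
  have ey : (coprod.inr ≫ pushout.inl (coprod.map iY₀ iY₁) qX ≫ qY') ≫ pY = 𝟙 Y₁ := by
    simp only [Category.assoc, facY, pushout.inl_desc, coprod.inr_desc]
  have wx20 : ms.W (coprod.inl ≫ qX) :=
    ms.W_of_comp_right _ pX wpX (by rw [fx]; exact wx)
  have wx21 : ms.W (coprod.inr ≫ qX) :=
    ms.W_of_comp_right _ pX wpX (by rw [ex]; exact ms.W_of_iso _ inferInstance)
  have wz20 : ms.W (coprod.inl ≫ qZ) :=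
    ms.W_of_comp_right _ pZ wpZ (by rw [fz]; exact wz)
  have wz21 : ms.W (coprod.inr ≫ qZ) :=
    ms.W_of_comp_right _ pZ wpZ (by rw [ez]; exact ms.W_of_iso _ inferInstance)
  have wy20 : ms.W (coprod.inl ≫ pushout.inl (coprod.map iY₀ iY₁) qX ≫ qY') :=
    ms.W_of_comp_right _ pY wpY (by rw [fy]; exact wy)
  have wy21 : ms.W (coprod.inr ≫ pushout.inl (coprod.map iY₀ iY₁) qX ≫ qY') :=
    ms.W_of_comp_right _ pY wpY (by rw [ey]; exact ms.W_of_iso _ inferInstance)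
  -- cofibration components
  have cinlX : ms.Cof (coprod.inl : X₀ ⟶ X₀ ⨿ X₁) :=
    cof_of_isPushout (IsPushout.of_hasBinaryCoproduct' X₀ X₁).flip cX₁
  have cinrX : ms.Cof (coprod.inr : X₁ ⟶ X₀ ⨿ X₁) :=
    cof_of_isPushout (IsPushout.of_hasBinaryCoproduct' X₀ X₁) cX₀
  have cinlZ : ms.Cof (coprod.inl : Z₀ ⟶ Z₀ ⨿ Z₁) :=
    cof_of_isPushout (IsPushout.of_hasBinaryCoproduct' Z₀ Z₁).flip cZ₁
  have cinrZ : ms.Cof (coprod.inr : Z₁ ⟶ Z₀ ⨿ Z₁) :=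
    cof_of_isPushout (IsPushout.of_hasBinaryCoproduct' Z₀ Z₁) cZ₀
  have cx20 : ms.Cof (coprod.inl ≫ qX) := cof_comp cinlX cqX
  have cx21 : ms.Cof (coprod.inr ≫ qX) := cof_comp cinrX cqX
  have cz20 : ms.Cof (coprod.inl ≫ qZ) := cof_comp cinlZ cqZ
  have cz21 : ms.Cof (coprod.inr ≫ qZ) := cof_comp cinrZ cqZ
  -- the comparison map of the first span map is a trivial cofibration
  have cm0 : ms.Cof (pushout.desc (coprod.inl ≫ pushout.inl (coprod.map iY₀ iY₁) qX)
      (pushout.inr (coprod.map iY₀ iY₁) qX) (coprod_partial_cond iY₀ iY₁ qX)) :=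
    cof_of_isPushout (isPushout_coprod_left iY₀ iY₁ qX) cof₁
  have hm0 : pushout.desc (coprod.inl ≫ pushout.inl (coprod.map iY₀ iY₁) qX)
      (pushout.inr (coprod.map iY₀ iY₁) qX) (coprod_partial_cond iY₀ iY₁ qX) ≫ qY'
      = pushout.desc (coprod.inl ≫ pushout.inl (coprod.map iY₀ iY₁) qX ≫ qY')
        (pushout.inr (coprod.map iY₀ iY₁) qX ≫ qY') c10 := by
    apply pushout.hom_ext
    · simp
    · simp
  have cw0 : ms.Cof (pushout.desc (coprod.inl ≫ pushout.inl (coprod.map iY₀ iY₁) qX ≫ qY')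
      (pushout.inr (coprod.map iY₀ iY₁) qX ≫ qY') c10) := by
    rw [← hm0]
    exact cof_comp cm0 cqY'
  obtain ⟨cV0, wV0⟩ :=
    trivCof_of_isPushout (IsPushout.of_hasPushout iY₀ (coprod.inl ≫ qX)).flip cx20 wx20
  have ww0 : ms.W (pushout.desc (coprod.inl ≫ pushout.inl (coprod.map iY₀ iY₁) qX ≫ qY')
      (pushout.inr (coprod.map iY₀ iY₁) qX ≫ qY') c10) :=
    ms.W_of_comp_left _ _ wV0 (by rw [pushout.inl_desc]; exact wy20)
  -- the comparison map of the second span map is a trivial cofibration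
  have cm1 : ms.Cof (pushout.desc (coprod.inr ≫ pushout.inl (coprod.map iY₀ iY₁) qX)
      (pushout.inr (coprod.map iY₀ iY₁) qX) (coprod_partial_cond' iY₀ iY₁ qX)) :=
    cof_of_isPushout (isPushout_coprod_right iY₀ iY₁ qX) cof₀
  have hm1 : pushout.desc (coprod.inr ≫ pushout.inl (coprod.map iY₀ iY₁) qX)
      (pushout.inr (coprod.map iY₀ iY₁) qX) (coprod_partial_cond' iY₀ iY₁ qX) ≫ qY'
      = pushout.desc (coprod.inr ≫ pushout.inl (coprod.map iY₀ iY₁) qX ≫ qY')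
        (pushout.inr (coprod.map iY₀ iY₁) qX ≫ qY') c11 := by
    apply pushout.hom_ext
    · simp
    · simp
  have cw1 : ms.Cof (pushout.desc (coprod.inr ≫ pushout.inl (coprod.map iY₀ iY₁) qX ≫ qY')
      (pushout.inr (coprod.map iY₀ iY₁) qX ≫ qY') c11) := by
    rw [← hm1]
    exact cof_comp cm1 cqY'
  obtain ⟨cV1, wV1⟩ :=
    trivCof_of_isPushout (IsPushout.of_hasPushout iY₁ (coprod.inr ≫ qX)).flip cx21 wx21
  have ww1 : ms.W (pushout.desc (coprod.inr ≫ pushout.inl (coprod.map iY₀ iY₁) qX ≫ qY')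
      (pushout.inr (coprod.map iY₀ iY₁) qX ≫ qY') c11) :=
    ms.W_of_comp_left _ _ wV1 (by rw [pushout.inl_desc]; exact wy21)
  -- the two span inclusions induce weak equivalences on pushouts
  have Wj0 := glue_trivCof iY₀ iZ₀ (pushout.inr (coprod.map iY₀ iY₁) qX ≫ qY') iZ₂
    (coprod.inl ≫ qX) (coprod.inl ≫ pushout.inl (coprod.map iY₀ iY₁) qX ≫ qY')
    (coprod.inl ≫ qZ) c10 c20 cz20 wz20 cw0 ww0
  have Wj1 := glue_trivCof iY₁ iZ₁ (pushout.inr (coprod.map iY₀ iY₁) qX ≫ qY') iZ₂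
    (coprod.inr ≫ qX) (coprod.inr ≫ pushout.inl (coprod.map iY₀ iY₁) qX ≫ qY')
    (coprod.inr ≫ qZ) c11 c21 cz21 wz21 cw1 ww1
  -- two-out-of-three juggling
  have comp1 : pushout.map iY₁ iZ₁ (pushout.inr (coprod.map iY₀ iY₁) qX ≫ qY') iZ₂
        (coprod.inr ≫ pushout.inl (coprod.map iY₀ iY₁) qX ≫ qY') (coprod.inr ≫ qZ)
        (coprod.inr ≫ qX) c11 c21
      ≫ pushout.map (pushout.inr (coprod.map iY₀ iY₁) qX ≫ qY') iZ₂ iY₁ iZ₁ pY pZ pX cp1 hiZb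
      = 𝟙 (pushout iY₁ iZ₁) := by
    apply pushout.hom_ext
    · simp [reassoc_of% ey]
    · simp [reassoc_of% ez]
  have wp : ms.W (pushout.map (pushout.inr (coprod.map iY₀ iY₁) qX ≫ qY') iZ₂ iY₁ iZ₁
      pY pZ pX cp1 hiZb) :=
    ms.W_of_comp_left _ _ Wj1 (by rw [comp1]; exact ms.W_of_iso _ inferInstance)
  have comp0 : pushout.map iY₀ iZ₀ (pushout.inr (coprod.map iY₀ iY₁) qX ≫ qY') iZ₂
        (coprod.inl ≫ pushout.inl (coprod.map iY₀ iY₁) qX ≫ qY') (coprod.inl ≫ qZ)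
        (coprod.inl ≫ qX) c10 c20
      ≫ pushout.map (pushout.inr (coprod.map iY₀ iY₁) qX ≫ qY') iZ₂ iY₁ iZ₁ pY pZ pX cp1 hiZb
      = pushout.map iY₀ iZ₀ iY₁ iZ₁ y z x h₁ h₂ := by
    apply pushout.hom_ext
    · simp [reassoc_of% fy]
    · simp [reassoc_of% fz]
  rw [← comp0]
  exact ms.W_comp _ _ Wj0 wp
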